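/- arXiv:cs/0003047 — 5 statements merged into one kernel-verified Lean document; each statement's English description precedes it below -/
import Mathlib

section
/- With the noop action included, the sequence of reachable-state sets satisfies: Z_i = Z_{i+1} implies Z_i = Z_j for all j ≥ i; consequently, a goal state is reachable from the initial state if and only if the goal set G intersects Z_k, where k is the first index with Z_k = Z_{k+1}. -/
/-!
Each `Z (i + 1)` is a function of `Z i` alone, so once two consecutive sets agree the sequence is
constant from then on; being also increasing, it never exceeds `Z k` once `Z k = Z (k + 1)`.
`Z n` is exactly the set of states reachable from `z_init` in at most `n` steps, so
a goal state is reachable iff it lies in some `Z n`, iff it lies in `Z k`.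
-/

section Iteration

variable {α : Type*} {f : α → α} {Z : ℕ → α}

theorem eq_of_succ_eq_of_le (hZ : ∀ i, Z (i + 1) = f (Z i)) {i : ℕ} (hi : Z i = Z (i + 1))
    {j : ℕ} (hij : i ≤ j) : Z j = Z i := by
  induction j, hij using Nat.le_induction with
  | base => rfl
  | succ j _ ih => rw [hZ, ih, ← hZ, ← hi]

theorem le_of_succ_eq [Preorder α] (hZ : ∀ i, Z (i + 1) = f (Z i)) (hmono : Monotone Z)
    {k : ℕ} (hk : Z k = Z (k + 1)) (m : ℕ) : Z m ≤ Z k := by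
  rcases le_total m k with h | h
  · exact hmono h
  · exact (eq_of_succ_eq_of_le hZ hk h).le

end Iteration

section Paths

variable {α : Type*} {r : α → α → Prop}

theorem exists_path_snoc {c : ℕ → α} {m : ℕ} (hc : ∀ j < m, r (c j) (c (j + 1))) {z : α}
    (hz : r (c m) z) :
    ∃ c' : ℕ → α, c' 0 = c 0 ∧ (∀ j < m + 1, r (c' j) (c' (j + 1))) ∧ c' (m + 1) = z := by
  refine ⟨Function.update c (m + 1) z, by simp, fun j hj => ?_, by simp⟩
  rw [Function.update_of_ne (by omega)]
  rcases Nat.lt_succ_iff_lt_or_eq.1 hj with hj | rfl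
  · rw [Function.update_of_ne (by omega)]
    exact hc j hj
  · simpa using hz

variable {Z : ℕ → Set α} {x₀ : α}

theorem mem_iff_exists_path_le (hZ0 : Z 0 = {x₀})
    (hZs : ∀ i, Z (i + 1) = Z i ∪ {z' | ∃ z ∈ Z i, r z z'}) (n : ℕ) (z : α) :
    z ∈ Z n ↔ ∃ m ≤ n, ∃ c : ℕ → α, c 0 = x₀ ∧ (∀ j < m, r (c j) (c (j + 1))) ∧ c m = z := by
  induction n generalizing z with
  | zero =>
    simp only [hZ0, Set.mem_singleton_iff, Nat.le_zero, exists_eq_left, Nat.not_lt_zero,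
      false_imp_iff, implies_true, true_and]
    exact ⟨fun hz => ⟨fun _ => x₀, rfl, hz.symm⟩, fun ⟨c, h0, hz⟩ => hz ▸ h0⟩
  | succ n ih =>
    rw [hZs, Set.mem_union]
    constructor
    · rintro (hz | ⟨w, hw, hwz⟩)
      · obtain ⟨m, hm, hc⟩ := (ih z).1 hz
        exact ⟨m, hm.trans n.le_succ, hc⟩
      · obtain ⟨m, hm, c, h0, hc, rfl⟩ := (ih w).1 hw
        obtain ⟨c', h0', hc', hz⟩ := exists_path_snoc hc hwz
        exact ⟨m + 1, by omega, c', h0'.trans h0, hc', hz⟩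
    · rintro ⟨_ | m, hm, c, h0, hc, rfl⟩
      · exact .inl ((ih _).2 ⟨0, n.zero_le, c, h0, hc, rfl⟩)
      · refine .inr ⟨c m, (ih _).2 ⟨m, by omega, c, h0, fun j hj => hc j (by omega), rfl⟩, ?_⟩
        exact hc m m.lt_succ_self

end Paths

theorem fixpoint_goal_test_correct_general
    (State : Type)
    (T : State → State → Prop)
    (z_init : State) (G : Set State)
    (Z : ℕ → Set State)
    (hZ0 : Z 0 = {z_init})
    (hZs : ∀ i, Z (i + 1) = Z i ∪ {z' | ∃ z ∈ Z i, T z z'}) :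
    (∀ i, Z i = Z (i + 1) → ∀ j, i ≤ j → Z j = Z i) ∧
    (∀ k, Z k = Z (k + 1) → (∀ j < k, Z j ≠ Z (j + 1)) →
      ((∃ (m : ℕ) (c : ℕ → State), c 0 = z_init ∧ (∀ j < m, T (c j) (c (j + 1))) ∧ c m ∈ G)
        ↔ ∃ z ∈ G, z ∈ Z k)) := by
  obtain ⟨step, hstep⟩ : ∃ step : Set State → Set State, ∀ i, Z (i + 1) = step (Z i) :=
    ⟨fun S => S ∪ {z' | ∃ z ∈ S, T z z'}, hZs⟩
  refine ⟨fun i hi j hij => eq_of_succ_eq_of_le hstep hi hij, fun k hk _ => ?_⟩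
  have hmono : Monotone Z :=
    monotone_nat_of_le_succ fun i => (hZs i).symm ▸ Set.subset_union_left
  have hmem := mem_iff_exists_path_le hZ0 hZs
  constructor
  · rintro ⟨m, c, h0, hc, hG⟩
    exact ⟨c m, hG, le_of_succ_eq hstep hmono hk m ((hmem m _).2 ⟨m, le_rfl, c, h0, hc, rfl⟩)⟩
  · rintro ⟨z, hzG, hz⟩
    obtain ⟨m, -, c, h0, hc, rfl⟩ := (hmem k z).1 hz
    exact ⟨m, c, h0, hc, hzG⟩

theorem fixpoint_goal_test_correct
    (State : Type) [Fintype State]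
    (T : State → State → Prop) (hrefl : ∀ z, T z z)
    (z_init : State) (G : Set State)
    (Z : ℕ → Set State)
    (hZ0 : Z 0 = {z_init})
    (hZs : ∀ i, Z (i + 1) = Z i ∪ {z' | ∃ z ∈ Z i, T z z'}) :
    (∀ i, Z i = Z (i + 1) → ∀ j, i ≤ j → Z j = Z i) ∧
    (∀ k, Z k = Z (k + 1) → (∀ j < k, Z j ≠ Z (j + 1)) →
      ((∃ (m : ℕ) (c : ℕ → State), c 0 = z_init ∧ (∀ j < m, T (c j) (c (j + 1))) ∧ c m ∈ G)
        ↔ ∃ z ∈ G, z ∈ Z k)) :=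
  fixpoint_goal_test_correct_general State T z_init G Z hZ0 hZs
end

section
/- Frontier simplification is correct: if (F_i) is any sequence of state sets satisfying R_i \ R_{i-1} ⊆ F_i ⊆ R_i for all i (where R_i is the set of states reachable in at most i steps and R_{-1} = ∅), and the recursion F_{i+1}' is computed as the T-image of F_i, then the cumulative union ⋃_{j ≤ i} F_j equals R_i for every i; in particular some F_i meets the goal set G iff some R_i does. -/
theorem frontier_simplification_correct
    (State : Type) (z_init : State)
    (T : State → State → Prop) (hrefl : ∀ z, T z z)
    (G : Set State)
    (R : ℕ → Set State)
    (hR0 : R 0 = {z_init})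
    (hRs : ∀ i, R (i + 1) = {z' | ∃ z ∈ R i, T z z'})
    (F : ℕ → Set State)
    (hF0 : R 0 ⊆ F 0 ∧ F 0 ⊆ R 0)
    (hFs : ∀ i, R (i + 1) \ R i ⊆ F (i + 1) ∧ F (i + 1) ⊆ R (i + 1)) :
    (∀ i, (⋃ j ≤ i, F j) = R i) ∧
    ((∃ i, (F i ∩ G).Nonempty) ↔ ∃ i, (R i ∩ G).Nonempty) := by
  have hmono : ∀ i, R i ⊆ R (i + 1) := by
    intro i x hx
    rw [hRs i]
    exact ⟨x, hx, hrefl x⟩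
  have key : ∀ i, (⋃ j ≤ i, F j) = R i := by
    intro i
    induction i with
    | zero =>
      apply Set.Subset.antisymm
      · intro x hx
        simp only [Set.mem_iUnion] at hx
        obtain ⟨j, hj, hx⟩ := hx
        interval_cases j
        exact hF0.2 hx
      · intro x hx
        simp only [Set.mem_iUnion]
        exact ⟨0, le_refl 0, hF0.1 hx⟩
    | succ n ih =>
      apply Set.Subset.antisymm
      · intro x hx
        simp only [Set.mem_iUnion] at hx
        obtain ⟨j, hj, hx⟩ := hx
        rcases Nat.le_succ_iff.mp hj with h | h
        · have : x ∈ R n := ih ▸ Set.mem_iUnion₂.mpr ⟨j, h, hx⟩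
          exact hmono n this
        · subst h; exact (hFs n).2 hx
      · intro x hx
        by_cases hn : x ∈ R n
        · have : x ∈ ⋃ j ≤ n, F j := ih ▸ hn
          simp only [Set.mem_iUnion] at this ⊢
          obtain ⟨j, hj, hx'⟩ := this
          exact ⟨j, hj.trans (Nat.le_succ n), hx'⟩
        · have : x ∈ F (n + 1) := (hFs n).1 ⟨hx, hn⟩
          exact Set.mem_iUnion₂.mpr ⟨n + 1, le_refl _, this⟩
  refine ⟨key, ?_, ?_⟩
  · rintro ⟨i, x, hxF, hxG⟩
    have hFR : F i ⊆ R i := by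
      cases i with
      | zero => exact hF0.2
      | succ n => exact (hFs n).2
    exact ⟨i, x, hFR hxF, hxG⟩
  · rintro ⟨i, x, hxR, hxG⟩
    have : x ∈ ⋃ j ≤ i, F j := (key i) ▸ hxR
    obtain ⟨j, _, hx⟩ := Set.mem_iUnion₂.mp this
    exact ⟨j, x, hx, hxG⟩
end

section
/- Correctness of the encoding of a state update: let ϑ⁻ and ϑ⁺ be disjoint finite sets of fluents; then for states z, z' (finite sets of fluents, over the same alphabet), the multiset equation z' ⊎ ϑ⁻ = z ⊎ ϑ⁺ (as multisets) holds with both z and z' duplicate-free if and only if ϑ⁻ ⊆ z, ϑ⁺ ∩ z = ∅, ϑ⁺ ⊆ z', ϑ⁻ ∩ z' = ∅, and z' = (z \ ϑ⁻) ∪ ϑ⁺. -/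
theorem state_update_characterization (Fluent : Type) [DecidableEq Fluent]
    (z z' θm θp : Finset Fluent) (hdisj : Disjoint θm θp) :
    z'.val + θm.val = z.val + θp.val ↔
      (θm ⊆ z ∧ Disjoint θp z ∧ θp ⊆ z' ∧ Disjoint θm z' ∧ z' = (z \ θm) ∪ θp) := by
  have hc : ∀ (s : Finset Fluent) (a : Fluent),
      Multiset.count a s.val = if a ∈ s then 1 else 0 := by
    intro s a
    split
    · exact Multiset.count_eq_one_of_mem s.nodup ‹_›
    · exact Multiset.count_eq_zero_of_notMem ‹_›
  have hd : ∀ a ∈ θm, a ∉ θp := fun a ha => Finset.disjoint_left.mp hdisj ha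
  constructor
  · intro h
    have key : ∀ a : Fluent,
        (if a ∈ z' then 1 else 0) + (if a ∈ θm then 1 else 0) =
        (if a ∈ z then 1 else 0) + (if a ∈ θp then 1 else 0) := by
      intro a
      have := congrArg (Multiset.count a) h
      simpa [Multiset.count_add, hc] using this
    refine ⟨?_, ?_, ?_, ?_, ?_⟩
    · intro a ha
      have := key a
      have h2 := hd a ha
      by_contra hz
      simp [ha, hz, h2] at this
      all_goals first
      | exact this
      | (split_ifs at this <;> omega)
    · rw [Finset.disjoint_left]
      intro a ha hz
      have := key a
      have h2 : a ∉ θm := fun hm => hd a hm ha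
      simp [ha, hz, h2] at this
      all_goals first
      | exact this
      | (split_ifs at this <;> omega)
    · intro a ha
      have := key a
      have h2 : a ∉ θm := fun hm => hd a hm ha
      by_contra hz
      simp [ha, hz, h2] at this
      all_goals first
      | exact this
      | (split_ifs at this <;> omega)
    · rw [Finset.disjoint_left]
      intro a ha hz
      have := key a
      have h2 := hd a ha
      simp [ha, hz, h2] at this
      all_goals first
      | exact this
      | (split_ifs at this <;> omega)
    · ext a
      have := key a
      simp only [Finset.mem_union, Finset.mem_sdiff]
      by_cases h1 : a ∈ z' <;> by_cases h2 : a ∈ z <;> by_cases h3 : a ∈ θm <;>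
        by_cases h4 : a ∈ θp <;> simp_all <;> omega
  · rintro ⟨h1, h2, h3, h4, rfl⟩
    ext a
    have e1 : a ∈ θm → a ∈ z := fun h => h1 h
    have e2 : a ∈ θp → a ∉ z := fun h => Finset.disjoint_left.mp h2 h
    have e3 : a ∈ θm → a ∉ θp := hd a
    simp only [Multiset.count_add, hc, Finset.mem_union, Finset.mem_sdiff]
    split_ifs <;> first | omega | (exfalso; tauto)
end

section
/- Invariance in the Gripper domain: every state reachable from the initial Gripper state satisfies, for each ball b, exactly one of the fluents at(b,A), at(b,B), carry(b,G1), carry(b,G2) holds; and for each gripper g, free(g) holds iff no ball is carried by g; and exactly one of atR(A), atR(B) holds. -/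
inductive GRoom | A | B
  deriving DecidableEq

inductive GGrip | G1 | G2
  deriving DecidableEq

inductive GFl (Ball : Type)
  | at_ : Ball → GRoom → GFl Ball
  | free : GGrip → GFl Ball
  | carry : Ball → GGrip → GFl Ball
  | atR : GRoom → GFl Ball
  deriving DecidableEq

variable {Ball : Type} [DecidableEq Ball] [Fintype Ball]

/-- Transition relation of the Gripper domain with balls from `Ball` (including noop). -/
def GripperT (z z' : Finset (GFl Ball)) : Prop :=
  z' = z ∨
  (∃ r₁ r₂ : GRoom, GFl.atR r₁ ∈ z ∧ r₁ ≠ r₂ ∧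
      z' = insert (GFl.atR r₂) (z.erase (GFl.atR r₁))) ∨
  (∃ (b : Ball) (r : GRoom) (g : GGrip),
      GFl.at_ b r ∈ z ∧ GFl.atR r ∈ z ∧ GFl.free g ∈ z ∧ GFl.carry b g ∉ z ∧
      z' = insert (GFl.carry b g) ((z.erase (GFl.at_ b r)).erase (GFl.free g))) ∨
  (∃ (b : Ball) (r : GRoom) (g : GGrip),
      GFl.carry b g ∈ z ∧ GFl.atR r ∈ z ∧ GFl.at_ b r ∉ z ∧ GFl.free g ∉ z ∧
      z' = insert (GFl.at_ b r) (insert (GFl.free g) (z.erase (GFl.carry b g))))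

/-- Initial state: all balls in room A, both grippers free, robot in room A. -/
def GripperInit : Finset (GFl Ball) :=
  (Finset.univ.image fun b : Ball => GFl.at_ b GRoom.A) ∪
    {GFl.free GGrip.G1, GFl.free GGrip.G2, GFl.atR GRoom.A}

/-- Exactly one of four propositions holds. -/
def ExactlyOne4 (p q r s : Prop) : Prop :=
  (p ∧ ¬q ∧ ¬r ∧ ¬s) ∨ (¬p ∧ q ∧ ¬r ∧ ¬s) ∨ (¬p ∧ ¬q ∧ r ∧ ¬s) ∨ (¬p ∧ ¬q ∧ ¬r ∧ s)

/-- Strengthened (inductive) invariant. -/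
def GInv (z : Finset (GFl Ball)) : Prop :=
  (∀ b : Ball,
      ExactlyOne4 (GFl.at_ b GRoom.A ∈ z) (GFl.at_ b GRoom.B ∈ z)
        (GFl.carry b GGrip.G1 ∈ z) (GFl.carry b GGrip.G2 ∈ z)) ∧
  (∀ g : GGrip, GFl.free g ∈ z ↔ ∀ b : Ball, GFl.carry b g ∉ z) ∧
  (Xor' (GFl.atR GRoom.A ∈ z) (GFl.atR GRoom.B ∈ z)) ∧
  (∀ (g : GGrip) (b b' : Ball), GFl.carry b g ∈ z → GFl.carry b' g ∈ z → b = b')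

lemma ginv_init : GInv (GripperInit (Ball := Ball)) := by
  refine ⟨fun b => ?_, fun g => ?_, ?_, fun g b b' hb => ?_⟩
  · left; simp [GripperInit]
  · cases g <;> simp [GripperInit]
  · left; simp [GripperInit, Xor']
  · simp [GripperInit] at hb

lemma ginv_step {z z' : Finset (GFl Ball)} (h : GripperT z z') (hz : GInv z) : GInv z' := by
  obtain ⟨h1, h2, h3, h4⟩ := hz
  rcases h with rfl | ⟨r₁, r₂, hr₁, hne, rfl⟩ | ⟨b, r, g, hb, hr, hg, hc, rfl⟩ |
    ⟨b, r, g, hb, hr, ha, hg, rfl⟩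
  · exact ⟨h1, h2, h3, h4⟩
  · -- move
    have m : ∀ x : GFl Ball, x ∈ insert (GFl.atR r₂) (z.erase (GFl.atR r₁)) ↔
        x = GFl.atR r₂ ∨ (x ≠ GFl.atR r₁ ∧ x ∈ z) := by
      intro x; simp [Finset.mem_insert, Finset.mem_erase]
    refine ⟨fun b => ?_, fun g => ?_, ?_, fun g b b' hcb hcb' => ?_⟩
    · have hA := h1 b
      simp only [ExactlyOne4, m] at hA ⊢
      simp only [reduceCtorEq, ne_eq, not_false_iff, false_or, true_and]
      exact hA
    · have := h2 g
      simp only [m]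
      simp only [reduceCtorEq, ne_eq, not_false_iff, false_or, true_and, not_or, not_and]
      exact this
    · simp only [Xor', m, reduceCtorEq, ne_eq] at h3 ⊢
      cases r₁ <;> cases r₂ <;> simp_all <;> tauto
    · simp only [m, reduceCtorEq, ne_eq, not_false_iff, false_or, true_and] at hcb hcb'
      exact h4 g b b' hcb hcb'
  · -- pick
    have m : ∀ x : GFl Ball,
        x ∈ insert (GFl.carry b g) ((z.erase (GFl.at_ b r)).erase (GFl.free g)) ↔
        x = GFl.carry b g ∨ (x ≠ GFl.at_ b r ∧ x ≠ GFl.free g ∧ x ∈ z) := by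
      intro x; simp [Finset.mem_insert, Finset.mem_erase]; tauto
    have hnog : ∀ b'' : Ball, GFl.carry b'' g ∉ z := (h2 g).1 hg
    refine ⟨fun b' => ?_, fun g' => ?_, ?_, fun g' b₁ b₂ hcb hcb' => ?_⟩
    · rcases eq_or_ne b' b with rfl | hbb
      · have hA := h1 b'
        simp only [ExactlyOne4, m] at hA ⊢
        cases r <;> cases g <;>
          simp only [GFl.carry.injEq, GFl.at_.injEq, reduceCtorEq, ne_eq, not_and, not_or,
            not_false_iff, true_and, and_true, and_self, false_or, or_false, not_true,
            not_not] at hA ⊢ <;>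
          simp_all <;> tauto
      · have hA := h1 b'
        simp only [ExactlyOne4, m] at hA ⊢
        simp only [GFl.carry.injEq, GFl.at_.injEq, hbb, false_and, reduceCtorEq, ne_eq,
          not_false_iff, true_and, false_or]
        tauto
    · rcases eq_or_ne g' g with rfl | hgg
      · constructor
        · intro hf
          rw [m] at hf
          rcases hf with hf | ⟨_, hf, _⟩
          · exact absurd hf (by simp)
          · exact absurd rfl hf
        · intro hcc
          exact absurd ((m _).2 (Or.inl rfl)) (hcc b)
      · constructor
        · intro hf b''
          rw [m] at hf
          rw [m]
          rcases hf with hf | ⟨_, _, hf⟩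
          · exact absurd hf (by simp [hgg])
          · rintro (hh | ⟨_, _, hh⟩)
            · simp [GFl.carry.injEq, hgg] at hh
            · exact (h2 g').1 hf b'' hh
        · intro hcc
          rw [m]
          refine Or.inr ⟨by simp, by simp [hgg], (h2 g').2 fun b'' hb'' => ?_⟩
          exact hcc b'' ((m _).2 (Or.inr ⟨by simp, by simp [hgg], hb''⟩))
    · simp only [Xor', m, reduceCtorEq, ne_eq, not_false_iff, true_and, false_or] at h3 ⊢
      exact h3
    · rw [m] at hcb hcb'
      rcases hcb with h₁ | ⟨_, _, h₁⟩ <;> rcases hcb' with h₂ | ⟨_, _, h₂⟩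
      · injection h₁ with e1 e2; injection h₂ with e3 e4; rw [e1, e3]
      · injection h₁ with e1 e2; subst e2; exact absurd h₂ (hnog b₂)
      · injection h₂ with e3 e4; subst e4; exact absurd h₁ (hnog b₁)
      · exact h4 g' b₁ b₂ h₁ h₂
  · -- drop
    have m : ∀ x : GFl Ball,
        x ∈ insert (GFl.at_ b r) (insert (GFl.free g) (z.erase (GFl.carry b g))) ↔
        x = GFl.at_ b r ∨ x = GFl.free g ∨ (x ≠ GFl.carry b g ∧ x ∈ z) := by
      intro x; simp [Finset.mem_insert, Finset.mem_erase]
    have honly : ∀ b'' : Ball, b'' ≠ b → GFl.carry b'' g ∉ z := by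
      intro b'' hne hcc
      exact hne (h4 g b'' b hcc hb)
    refine ⟨fun b' => ?_, fun g' => ?_, ?_, fun g' b₁ b₂ hcb hcb' => ?_⟩
    · rcases eq_or_ne b' b with rfl | hbb
      · have hA := h1 b'
        simp only [ExactlyOne4, m] at hA ⊢
        cases r <;> cases g <;>
          simp only [GFl.carry.injEq, GFl.at_.injEq, reduceCtorEq, ne_eq, not_and, not_or,
            not_false_iff, true_and, and_true, and_self, false_or, or_false, not_true,
            not_not] at hA ⊢ <;>
          simp_all <;> tauto
      · have hA := h1 b'
        simp only [ExactlyOne4, m] at hA ⊢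
        simp only [GFl.carry.injEq, GFl.at_.injEq, hbb, false_and, reduceCtorEq, ne_eq,
          not_false_iff, true_and, false_or]
        tauto
    · rcases eq_or_ne g' g with rfl | hgg
      · constructor
        · intro _ b''
          rw [m]
          rintro (hh | hh | ⟨hne, hh⟩)
          · exact absurd hh (by simp)
          · exact absurd hh (by simp)
          · rcases eq_or_ne b'' b with rfl | hne'
            · exact hne rfl
            · exact honly b'' hne' hh
        · intro _
          exact (m _).2 (Or.inr (Or.inl rfl))
      · constructor
        · intro hf b''
          rw [m] at hf
          rw [m]
          rcases hf with hf | hf | ⟨_, hf⟩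
          · exact absurd hf (by simp)
          · exact absurd hf (by simp [hgg])
          · rintro (hh | hh | ⟨_, hh⟩)
            · exact absurd hh (by simp)
            · exact absurd hh (by simp [hgg])
            · exact (h2 g').1 hf b'' hh
        · intro hcc
          rw [m]
          refine Or.inr (Or.inr ⟨by simp [hgg], (h2 g').2 fun b'' hb'' => ?_⟩)
          exact hcc b'' ((m _).2 (Or.inr (Or.inr ⟨by simp [hgg], hb''⟩)))
    · simp only [Xor', m, reduceCtorEq, ne_eq, not_false_iff, true_and, false_or] at h3 ⊢
      exact h3
    · rw [m] at hcb hcb'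
      simp only [GFl.carry.injEq, reduceCtorEq, ne_eq, false_or] at hcb hcb'
      exact h4 g' b₁ b₂ hcb.2 hcb'.2

theorem gripper_invariant (z : Finset (GFl Ball))
    (hreach : Relation.ReflTransGen GripperT GripperInit z) :
    (∀ b : Ball,
        ExactlyOne4 (GFl.at_ b GRoom.A ∈ z) (GFl.at_ b GRoom.B ∈ z)
          (GFl.carry b GGrip.G1 ∈ z) (GFl.carry b GGrip.G2 ∈ z)) ∧
    (∀ g : GGrip, GFl.free g ∈ z ↔ ∀ b : Ball, GFl.carry b g ∉ z) ∧
    Xor' (GFl.atR GRoom.A ∈ z) (GFl.atR GRoom.B ∈ z) := by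
  have h : GInv z := by
    induction hreach with
    | refl => exact ginv_init
    | tail _ h ih => exact ginv_step h ih
  exact ⟨h.1, h.2.1, h.2.2.1⟩
end

section
/- Goal-test correctness: let Φ_G be a propositional formula over {z_f} and G = {z : State | B(z) ⊨ Φ_G}. Then the planning problem has a solution (some reachable state satisfies Φ_G) if and only if there exists i ≤ 2^n − 1 such that the formula Z_i ∧ Φ_G is satisfiable, where Z_i is the formula representing the set of states reachable in at most i steps. -/
/-!
`R` is the orbit of `{z_init}` under the image map of `T`; since `T` is reflexive the orbit is an
increasing chain of sets of states. A strictly increasing chain of subsets of the `2 ^ n` states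
has at most `2 ^ n` members, so `R` becomes stationary at some `N ≤ 2 ^ n - 1`, and from then on
`R N` is the set of all reachable states. The formula `Z_i` is satisfiable together with `Φ_G`
exactly when some state of `R i` satisfies `Φ_G`, because every valuation encodes a state.
-/

theorem Set.exists_le_card_sub_one_eq_succ_of_monotone {α : Type*} [Finite α]
    {f : ℕ → Set α} (hf : Monotone f) (h0 : (f 0).Nonempty) :
    ∃ N ≤ Nat.card α - 1, f N = f (N + 1) := by
  by_contra! hne
  have hgrow : ∀ N ≤ Nat.card α, N + 1 ≤ (f N).ncard := by
    intro N hN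
    induction N with
    | zero => exact (Set.ncard_pos (Set.toFinite _)).2 h0
    | succ N ih =>
      have hlt : f N ⊂ f (N + 1) := (hf N.le_succ).lt_of_ne (hne N (by omega))
      have := Set.ncard_lt_ncard hlt
      have := ih (by omega)
      omega
  have := (hgrow _ le_rfl).trans (Set.ncard_le_card _)
  omega

theorem Finset.exists_decide_mem_eq {α : Type*} [Fintype α] [DecidableEq α] (v : α → Bool) :
    ∃ z : Finset α, (fun a => decide (a ∈ z)) = v :=
  ⟨Finset.univ.filter (v · = true), by funext a; simp⟩

namespace Relation

variable {α : Type*} {T : α → α → Prop} {a : α} {R : ℕ → Set α}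

theorem reflTransGen_iff_exists_mem (h0 : R 0 = {a})
    (hs : ∀ i, R (i + 1) = {z' | ∃ z ∈ R i, T z z'}) {z : α} :
    ReflTransGen T a z ↔ ∃ k, z ∈ R k := by
  constructor
  · intro h
    induction h with
    | refl => exact ⟨0, by simp [h0]⟩
    | tail _ hT ih =>
      obtain ⟨k, hk⟩ := ih
      exact ⟨k + 1, hs k ▸ ⟨_, hk, hT⟩⟩
  · rintro ⟨k, hk⟩
    induction k generalizing z with
    | zero =>
      rw [h0, Set.mem_singleton_iff] at hk
      exact hk ▸ ReflTransGen.refl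
    | succ k ih =>
      obtain ⟨w, hw, hT⟩ := hs k ▸ hk
      exact (ih hw).tail hT

theorem monotone_of_reflexive (hrefl : ∀ z, T z z)
    (hs : ∀ i, R (i + 1) = {z' | ∃ z ∈ R i, T z z'}) : Monotone R :=
  monotone_nat_of_le_succ fun i z hz => hs i ▸ ⟨z, hz, hrefl z⟩

theorem eq_of_eq_succ (hs : ∀ i, R (i + 1) = {z' | ∃ z ∈ R i, T z z'}) {N : ℕ}
    (hN : R N = R (N + 1)) {k : ℕ} (hk : N ≤ k) : R k = R N := by
  induction k, hk using Nat.le_induction with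
  | base => rfl
  | succ k _ ih => rw [hs, ih, ← hs, ← hN]

theorem reflTransGen_iff_mem_of_eq_succ (h0 : R 0 = {a}) (hrefl : ∀ z, T z z)
    (hs : ∀ i, R (i + 1) = {z' | ∃ z ∈ R i, T z z'}) {N : ℕ} (hN : R N = R (N + 1)) {z : α} :
    ReflTransGen T a z ↔ z ∈ R N := by
  rw [reflTransGen_iff_exists_mem h0 hs]
  refine ⟨fun ⟨k, hk⟩ => ?_, fun hz => ⟨N, hz⟩⟩
  rcases le_total k N with hkN | hNk
  · exact monotone_of_reflexive hrefl hs hkN hk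
  · exact eq_of_eq_succ hs hN hNk ▸ hk

end Relation

theorem goal_test_correct
    (Fluent : Type) [Fintype Fluent] [DecidableEq Fluent] (n : ℕ)
    (hn : Fintype.card Fluent = n)
    (T : Finset Fluent → Finset Fluent → Prop) (hrefl : ∀ z, T z z)
    (z_init : Finset Fluent)
    (ΦG : (Fluent → Bool) → Prop)
    (R : ℕ → Set (Finset Fluent))
    (hR0 : R 0 = {z_init})
    (hRs : ∀ i, R (i + 1) = {z' | ∃ z ∈ R i, T z z'})
    (ZF : ℕ → (Fluent → Bool) → Prop)
    (hrep : ∀ i (z : Finset Fluent), ZF i (fun f => decide (f ∈ z)) ↔ z ∈ R i) :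
    (∃ z : Finset Fluent, Relation.ReflTransGen T z_init z ∧ ΦG (fun f => decide (f ∈ z)))
      ↔ ∃ i ≤ 2 ^ n - 1, ∃ v : Fluent → Bool, ZF i v ∧ ΦG v := by
  obtain ⟨N, hN, hfix⟩ := Set.exists_le_card_sub_one_eq_succ_of_monotone
    (Relation.monotone_of_reflexive hrefl hRs) (by simp [hR0])
  rw [Nat.card_eq_fintype_card, Fintype.card_finset, hn] at hN
  constructor
  · rintro ⟨z, hz, hG⟩
    exact ⟨N, hN, _, (hrep N z).2
      ((Relation.reflTransGen_iff_mem_of_eq_succ hR0 hrefl hRs hfix).1 hz), hG⟩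
  · rintro ⟨i, -, v, hZ, hG⟩
    obtain ⟨z, rfl⟩ := Finset.exists_decide_mem_eq v
    exact ⟨z, (Relation.reflTransGen_iff_exists_mem hR0 hRs).2 ⟨i, (hrep i z).1 hZ⟩, hG⟩
end
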